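/- arXiv:1707.08854 — 6 statements merged into one kernel-verified Lean document; each statement's English description precedes it below -/
import Mathlib

section
/- For n = 3, the two first integrals H_1 = x_1 + x_2 + x_3 and H_2 = x_1 x_2^{k_3/k_2} x_3^{k_1/k_2} have linearly independent gradients at every point of the open octant {x_1,x_2,x_3 > 0} except possibly on a set of Lebesgue measure zero; in particular, the 3-dimensional system is completely integrable. -/
/-!
The gradient of `H₁` is the constant vector `(1, 1, 1)`, so the two gradients can only be
dependent where all partial derivatives of `H₂` agree. On the open octant, equality of the
first two, `x₂^a x₃^b = a x₁ x₂^(a-1) x₃^b` with `a = k₃/k₂`, already forces `x₂ = a x₁`;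
this hyperplane is Lebesgue-null. Indices are the paper's: `xᵢ` is `x (i - 1)`.
-/

open MeasureTheory

theorem linearIndependent_one_pair_of_apply_ne {K ι : Type*} [Field K] {v : ι → K} {i j : ι}
    (hv : v i ≠ v j) : LinearIndependent K ![fun _ => (1 : K), v] := by
  rw [LinearIndependent.pair_iff]
  intro s t hst
  have hi := congrFun hst i
  have hj := congrFun hst j
  simp only [Pi.add_apply, Pi.smul_apply, smul_eq_mul, mul_one, Pi.zero_apply] at hi hj
  have ht : t = 0 := by
    have : t * (v i - v j) = 0 := by linear_combination hi - hj
    exact (mul_eq_zero.mp this).resolve_right (sub_ne_zero.mpr hv)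
  subst ht
  exact ⟨by simpa using hi, rfl⟩

theorem MeasureTheory.Measure.addHaar_setOf_apply_eq_mul_apply {ι : Type*} [Fintype ι]
    (μ : Measure (ι → ℝ)) [μ.IsAddHaarMeasure] (a : ℝ) {i j : ι} (hij : i ≠ j) :
    μ {x | x j = a * x i} = 0 := by
  classical
  let f : (ι → ℝ) →ₗ[ℝ] ℝ := LinearMap.proj j - a • LinearMap.proj i
  have hker : {x : ι → ℝ | x j = a * x i} = LinearMap.ker f := by
    ext x
    simp [f, sub_eq_zero]
  rw [hker]
  refine Measure.addHaar_submodule μ _ fun htop => ?_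
  have : f (Pi.single j 1) = 0 := LinearMap.mem_ker.mp (htop ▸ Submodule.mem_top)
  simp [f, hij] at this

theorem fderiv_add_add_apply_single (x : Fin 3 → ℝ) (i : Fin 3) :
    fderiv ℝ (fun y : Fin 3 → ℝ => y 0 + y 1 + y 2) x (Pi.single i 1) = 1 := by
  have h : HasFDerivAt (fun y : Fin 3 → ℝ => y 0 + y 1 + y 2) _ x :=
    ((ContinuousLinearMap.proj 0 : (Fin 3 → ℝ) →L[ℝ] ℝ).hasFDerivAt.add
      (ContinuousLinearMap.proj 1 : (Fin 3 → ℝ) →L[ℝ] ℝ).hasFDerivAt).add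
      (ContinuousLinearMap.proj 2 : (Fin 3 → ℝ) →L[ℝ] ℝ).hasFDerivAt
  rw [h.fderiv]
  fin_cases i <;> simp

theorem fderiv_mul_rpow_mul_rpow_apply_single (a b : ℝ) {x : Fin 3 → ℝ} (hx1 : x 1 ≠ 0)
    (hx2 : x 2 ≠ 0) :
    (fun i => fderiv ℝ (fun y : Fin 3 → ℝ => y 0 * y 1 ^ a * y 2 ^ b) x (Pi.single i 1)) =
      ![x 1 ^ a * x 2 ^ b, x 0 * (a * x 1 ^ (a - 1)) * x 2 ^ b,
        x 0 * x 1 ^ a * (b * x 2 ^ (b - 1))] := by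
  have h0 := (ContinuousLinearMap.proj 0 : (Fin 3 → ℝ) →L[ℝ] ℝ).hasFDerivAt (x := x)
  have h1 := (Real.hasDerivAt_rpow_const (p := a) (Or.inl hx1)).comp_hasFDerivAt x
    (ContinuousLinearMap.proj 1 : (Fin 3 → ℝ) →L[ℝ] ℝ).hasFDerivAt
  have h2 := (Real.hasDerivAt_rpow_const (p := b) (Or.inl hx2)).comp_hasFDerivAt x
    (ContinuousLinearMap.proj 2 : (Fin 3 → ℝ) →L[ℝ] ℝ).hasFDerivAt
  have h : HasFDerivAt (fun y : Fin 3 → ℝ => y 0 * y 1 ^ a * y 2 ^ b) _ x := (h0.mul h1).mul h2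
  rw [h.fderiv]
  ext i
  fin_cases i <;> simp <;> ring

theorem lv3_completely_integrable_general (k1 k2 k3 : ℝ) :
    ∃ Z : Set (Fin 3 → ℝ), volume Z = 0 ∧
      ∀ x : Fin 3 → ℝ, (∀ i, 0 < x i) → x ∉ Z →
        LinearIndependent ℝ
          ![fun i : Fin 3 =>
              fderiv ℝ (fun y : Fin 3 → ℝ => y 0 + y 1 + y 2) x (Pi.single i 1),
            fun i : Fin 3 =>
              fderiv ℝ (fun y : Fin 3 → ℝ =>
                y 0 * (y 1) ^ (k3 / k2) * (y 2) ^ (k1 / k2)) x (Pi.single i 1)] := by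
  set a := k3 / k2
  set b := k1 / k2
  refine ⟨{x | x 1 = a * x 0},
    Measure.addHaar_setOf_apply_eq_mul_apply volume a (i := (0 : Fin 3)) (j := 1) (by decide),
    fun x hx hxZ => ?_⟩
  simp only [fderiv_add_add_apply_single,
    fderiv_mul_rpow_mul_rpow_apply_single a b (hx 1).ne' (hx 2).ne']
  refine linearIndependent_one_pair_of_apply_ne (i := 0) (j := 1) ?_
  intro heq
  have hx1a : x 1 ^ a = x 1 ^ (a - 1) * x 1 := by
    rw [← Real.rpow_add_one (hx 1).ne', sub_add_cancel]
  have hfactor : x 1 ^ (a - 1) * x 2 ^ b * (x 1 - a * x 0) = 0 := by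
    simp only [Matrix.cons_val_zero, Matrix.cons_val_one] at heq
    linear_combination heq - x 2 ^ b * hx1a
  have hpos : 0 < x 1 ^ (a - 1) * x 2 ^ b :=
    mul_pos (Real.rpow_pos_of_pos (hx 1) _) (Real.rpow_pos_of_pos (hx 2) _)
  exact hxZ (sub_eq_zero.mp ((mul_eq_zero.mp hfactor).resolve_left hpos.ne'))

/-- For `n = 3`, the gradients of `H₁ = x₁+x₂+x₃` and `H₂ = x₁ x₂^(k₃/k₂) x₃^(k₁/k₂)`
are linearly independent at every point of the open positive octant off a set of
Lebesgue measure zero; in particular the system is completely integrable. -/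
theorem lv3_completely_integrable (k1 k2 k3 : ℝ)
    (h1 : k1 ≠ 0) (h2 : k2 ≠ 0) (h3 : k3 ≠ 0) :
    ∃ Z : Set (Fin 3 → ℝ), volume Z = 0 ∧
      ∀ x : Fin 3 → ℝ, (∀ i, 0 < x i) → x ∉ Z →
        LinearIndependent ℝ
          ![fun i : Fin 3 =>
              fderiv ℝ (fun y : Fin 3 → ℝ => y 0 + y 1 + y 2) x (Pi.single i 1),
            fun i : Fin 3 =>
              fderiv ℝ (fun y : Fin 3 → ℝ =>
                y 0 * (y 1) ^ (k3 / k2) * (y 2) ^ (k1 / k2)) x (Pi.single i 1)] :=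
  lv3_completely_integrable_general k1 k2 k3
end

section
/- Let n ≥ 3 be odd and k_1,…,k_n nonzero reals. Define μ_j = (k_1 k_3 ⋯ k_{j-2})/(k_2 k_4 ⋯ k_{j-1}) for odd j ≥ 3 and μ_j = (k_{j+1} k_{j+3} ⋯ k_n)/(k_j k_{j+2} ⋯ k_{n-1}) for even j ≥ 2. Then H_2(x) = x_1 Π_{j=2}^n x_j^{μ_j} is a first integral of the Lotka-Volterra system ẋ_i = x_i(k_i x_{i+1} - k_{i-1} x_{i-1}) on the open positive orthant. -/
/-!
With 0-based indices, write `H = ∏ⱼ xⱼ ^ νⱼ` with `ν₀ = 1` and `νⱼ = μⱼ` otherwise. Then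
`xᵢ ∂ᵢH = νᵢ H`, so the derivative of `H` along the flow is
`H · ∑ᵢ νᵢ (kᵢ xᵢ₊₁ - kᵢ₋₁ xᵢ₋₁)`. Shifting indices turns this sum into
`∑ᵢ xᵢ (kᵢ₋₁ νᵢ₋₁ - kᵢ νᵢ₊₁)`, which vanishes because the exponents satisfy the cyclic
recursion `kⱼ νⱼ = kⱼ₊₁ νⱼ₊₂`. Away from the wrap-around this recursion is one telescoping
step of the defining products; at `j = n - 1` it holds because `n` is odd, so that both
`kₙ₋₁ νₙ₋₁` and `k₀ ν₁` equal `k₀ k₂ ⋯ kₙ₋₁ / (k₁ k₃ ⋯ kₙ₋₂)`.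
-/

open Finset

theorem mul_fderiv_prod_rpow_single {ι : Type*} [Fintype ι] [DecidableEq ι] (a : ι → ℝ)
    {x : ι → ℝ} (hx : ∀ j, x j ≠ 0) (i : ι) :
    x i * fderiv ℝ (fun y : ι → ℝ => ∏ j, y j ^ a j) x (Pi.single i 1) =
      a i * ∏ j, x j ^ a j := by
  have hfactor : ∀ j ∈ (univ : Finset ι), HasFDerivAt (fun y : ι → ℝ => y j ^ a j)
      ((a j * x j ^ (a j - 1)) • (ContinuousLinearMap.proj j : (ι → ℝ) →L[ℝ] ℝ)) x :=
    fun j _ => (Real.hasDerivAt_rpow_const (Or.inl (hx j))).comp_hasFDerivAt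
      (f := fun y : ι → ℝ => y j) x (hasFDerivAt_apply (f := x) j)
  rw [(HasFDerivAt.finsetProd hfactor).fderiv]
  simp only [FunLike.coe_sum, Finset.sum_apply, smul_apply, ContinuousLinearMap.proj_apply,
    Pi.single_apply, smul_eq_mul, mul_ite, mul_one, mul_zero, sum_ite_eq', mem_univ, if_true]
  rw [← mul_prod_erase univ (fun j => x j ^ a j) (mem_univ i), Real.rpow_sub_one (hx i)]
  field_simp [hx i]

theorem prod_rpow_ite_eq_mul_prod_erase {ι : Type*} [Fintype ι] [DecidableEq ι] (i₀ : ι)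
    (μ y : ι → ℝ) :
    ∏ j, y j ^ (if j = i₀ then 1 else μ j) = y i₀ * ∏ j ∈ univ.erase i₀, y j ^ μ j := by
  rw [← mul_prod_erase univ _ (mem_univ i₀), if_pos rfl, Real.rpow_one]
  congr 1
  exact prod_congr rfl fun j hj => by rw [if_neg (ne_of_mem_erase hj)]

theorem sum_mul_sub_shift_eq_zero {G : Type*} [AddCommGroup G] [Fintype G] (e : G)
    (k x ν : G → ℝ) (hν : ∀ j, k j * ν j = k (j + e) * ν (j + e + e)) :
    ∑ i, ν i * (k i * x (i + e) - k (i - e) * x (i - e)) = 0 := by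
  have hforward : ∑ i, ν i * k i * x (i + e) = ∑ i, ν (i - e) * k (i - e) * x i :=
    Fintype.sum_equiv (Equiv.addRight e) _ _ fun i => by simp
  have hbackward : ∑ i, ν i * k (i - e) * x (i - e) = ∑ i, ν (i + e) * k i * x i :=
    Fintype.sum_equiv (Equiv.subRight e) _ _ fun i => by simp
  have hstep : ∀ i, ν (i - e) * k (i - e) = ν (i + e) * k i := fun i => by
    simpa [mul_comm] using hν (i - e)
  simp only [mul_sub, sum_sub_distrib, ← mul_assoc, hforward, hbackward, hstep, sub_self]

namespace LotkaVolterra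

variable (K : ℕ → ℝ)

noncomputable def evenExponent (m : ℕ) : ℝ := ∏ t ∈ range m, K (2 * t) / K (2 * t + 1)

noncomputable def oddExponent (n a : ℕ) : ℝ :=
  ∏ t ∈ range ((n - a) / 2), K (a + 1 + 2 * t) / K (a + 2 * t)

/-- The exponent `μ_{a+1}` of the paper when `K a = k_{a+1}`; its value `1` at `a = 0` accounts
for the factor `x₁` of `H₂`. -/
noncomputable def exponent (n a : ℕ) : ℝ :=
  if a % 2 = 0 then evenExponent K (a / 2) else oddExponent K n a

variable {K}

theorem mul_evenExponent {m : ℕ} (hK : K (2 * m + 1) ≠ 0) :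
    K (2 * m) * evenExponent K m = K (2 * m + 1) * evenExponent K (m + 1) := by
  rw [evenExponent, evenExponent, prod_range_succ]
  field_simp

theorem mul_oddExponent {n a : ℕ} (h : a + 2 ≤ n) (hK : K a ≠ 0) :
    K a * oddExponent K n a = K (a + 1) * oddExponent K n (a + 2) := by
  have hlen : (n - a) / 2 = (n - (a + 2)) / 2 + 1 := by omega
  have hshift : ∀ t, a + 1 + 2 * (t + 1) = a + 2 + 1 + 2 * t ∧ a + 2 * (t + 1) = a + 2 + 2 * t :=
    fun t => ⟨by ring, by ring⟩
  rw [oddExponent, oddExponent, hlen, prod_range_succ']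
  simp only [hshift, mul_zero, add_zero]
  field_simp

theorem mul_exponent_of_add_two_le {n a : ℕ} (h : a + 2 ≤ n) (hK : ∀ b, K b ≠ 0) :
    K a * exponent K n a = K (a + 1) * exponent K n (a + 2) := by
  obtain ⟨m, rfl | rfl⟩ := Nat.even_or_odd' a
  · have hm : (2 * m + 2) / 2 = m + 1 := by omega
    simp only [exponent, Nat.mul_mod_right, Nat.add_mod_right, if_true, hm,
      Nat.mul_div_cancel_left m two_pos]
    exact mul_evenExponent (hK _)
  · simp only [exponent, show (2 * m + 1) % 2 = 1 by omega,
      show (2 * m + 1 + 2) % 2 = 1 by omega, one_ne_zero, if_false]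
    exact mul_oddExponent h (hK _)

theorem mul_evenExponent_eq_mul_oddExponent_one (m : ℕ) :
    K (2 * m) * evenExponent K m = K 0 * oddExponent K (2 * m + 1) 1 := by
  have hlen : (2 * m + 1 - 1) / 2 = m := by omega
  have hnum : ∏ t ∈ range (m + 1), K (2 * t) = K 0 * ∏ t ∈ range m, K (1 + 1 + 2 * t) := by
    rw [prod_range_succ', mul_comm]
    congr 1
    exact prod_congr rfl fun t _ => congrArg K (by ring)
  have hden : ∏ t ∈ range m, K (2 * t + 1) = ∏ t ∈ range m, K (1 + 2 * t) :=
    prod_congr rfl fun t _ => congrArg K (by ring)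
  rw [evenExponent, oddExponent, hlen, prod_div_distrib, prod_div_distrib, ← hden,
    mul_div_assoc', mul_comm (K _), ← prod_range_succ, hnum, mul_div_assoc]

theorem exponent_self {n : ℕ} (hn : Odd n) : exponent K n n = exponent K n 0 := by
  simp [exponent, oddExponent, evenExponent, Nat.odd_iff.mp hn]

theorem mul_exponent_eq_mul_exponent_add_two {n : ℕ} [NeZero n] (hn : 3 ≤ n) (hodd : Odd n)
    {k : Fin n → ℝ} (hk : ∀ i, k i ≠ 0) (j : Fin n) :
    k j * exponent (fun a => k (Fin.ofNat n a)) n j =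
      k (j + 1) * exponent (fun a => k (Fin.ofNat n a)) n ↑(j + 1 + 1) := by
  set K : ℕ → ℝ := fun a => k (Fin.ofNat n a)
  have hkj : k j = K j := by simp [K]
  have hkj₁ : k (j + 1) = K (j + 1) := by simp only [K]; congr 1; ext; simp [Fin.val_add]
  have hj₂ : ((j + 1 + 1 : Fin n) : ℕ) = (j + 2) % n := by simp [Fin.val_add]
  rw [hkj, hkj₁, hj₂]
  have hjn := j.isLt
  generalize (j : ℕ) = a at *
  rcases Nat.lt_or_ge (a + 2) n with hlt | hge
  · rw [Nat.mod_eq_of_lt hlt]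
    exact mul_exponent_of_add_two_le hlt.le fun b => hk _
  obtain ⟨m, hm⟩ := hodd
  rcases (show a + 2 = n ∨ a = 2 * m by omega) with heq | hwrap
  · rw [heq, Nat.mod_self, ← exponent_self ⟨m, hm⟩, ← heq]
    exact mul_exponent_of_add_two_le le_rfl fun b => hk _
  · have hKn : K (2 * m + 1) = K 0 := by simp only [K]; congr 1; ext; simp [← hm]
    have hmod : (2 * m + 2) % n = 1 := by
      rw [hm, show 2 * m + 2 = 1 + (2 * m + 1) by ring, Nat.add_mod_right,
        Nat.mod_eq_of_lt (by omega)]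
    rw [hwrap, hmod, hKn]
    simpa [exponent, hm] using mul_evenExponent_eq_mul_oddExponent_one (K := K) m

theorem ite_eq_exponent {n : ℕ} [NeZero n] {k μ : Fin n → ℝ}
    (hμeven : ∀ i : Fin n, 2 ≤ (i : ℕ) → (i : ℕ) % 2 = 0 →
      μ i = ∏ t ∈ range ((i : ℕ) / 2), k (Fin.ofNat n (2 * t)) / k (Fin.ofNat n (2 * t + 1)))
    (hμodd : ∀ i : Fin n, (i : ℕ) % 2 = 1 →
      μ i = ∏ t ∈ range ((n - (i : ℕ)) / 2),
        k (Fin.ofNat n ((i : ℕ) + 1 + 2 * t)) / k (Fin.ofNat n ((i : ℕ) + 2 * t)))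
    (j : Fin n) :
    (if j = 0 then 1 else μ j) = exponent (fun a => k (Fin.ofNat n a)) n j := by
  rcases eq_or_ne j 0 with rfl | hj
  · simp [exponent, evenExponent]
  have hpos : 0 < (j : ℕ) := Nat.pos_of_ne_zero (Fin.val_ne_zero_iff.mpr hj)
  rw [if_neg hj, exponent]
  split_ifs with hparity
  · exact hμeven j (by omega) hparity
  · exact hμodd j (by omega)

end LotkaVolterra

open LotkaVolterra

/-- For odd `n ≥ 3`, `H₂ = x₁ ∏_{j=2}^n x_j^{μ_j}` is a first integral of the
Lotka-Volterra system on the open positive orthant.  Indices here are 0-based: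
coordinate `i : Fin n` corresponds to `x_{i+1}`, so the 1-based exponents
`μ_j = k₁k₃⋯k_{j-2}/(k₂k₄⋯k_{j-1})` (odd `j ≥ 3`) and
`μ_j = k_{j+1}k_{j+3}⋯k_n/(k_j k_{j+2}⋯k_{n-1})` (even `j ≥ 2`) become the
products below over even/odd 0-based indices. -/
theorem lv_odd_H2_first_integral (n : ℕ) [NeZero n] (hn : 3 ≤ n) (hodd : Odd n)
    (k : Fin n → ℝ) (hk : ∀ i, k i ≠ 0)
    (μ : Fin n → ℝ)
    (hμeven : ∀ i : Fin n, 2 ≤ (i : ℕ) → (i : ℕ) % 2 = 0 →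
      μ i = ∏ t ∈ Finset.range ((i : ℕ) / 2),
        k (Fin.ofNat n (2 * t)) / k (Fin.ofNat n (2 * t + 1)))
    (hμodd : ∀ i : Fin n, (i : ℕ) % 2 = 1 →
      μ i = ∏ t ∈ Finset.range ((n - (i : ℕ)) / 2),
        k (Fin.ofNat n ((i : ℕ) + 1 + 2 * t)) / k (Fin.ofNat n ((i : ℕ) + 2 * t)))
    (x : Fin n → ℝ) (hx : ∀ i, 0 < x i) :
    ∑ i : Fin n, x i * (k i * x (i + 1) - k (i - 1) * x (i - 1)) *
        fderiv ℝ
          (fun y : Fin n → ℝ => y 0 * ∏ j ∈ Finset.univ.erase 0, (y j) ^ (μ j)) x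
          (Pi.single i 1) = 0 := by
  set ν : Fin n → ℝ := fun j => if j = 0 then 1 else μ j
  have hν : ∀ j, ν j = exponent (fun a => k (Fin.ofNat n a)) n j :=
    ite_eq_exponent hμeven hμodd
  have hrec : ∀ j, k j * ν j = k (j + 1) * ν (j + 1 + 1) := fun j => by
    rw [hν, hν]
    exact mul_exponent_eq_mul_exponent_add_two hn hodd hk j
  have hH : (fun y : Fin n → ℝ => y 0 * ∏ j ∈ univ.erase 0, y j ^ μ j) =
      fun y => ∏ j, y j ^ ν j :=
    funext fun y => (prod_rpow_ite_eq_mul_prod_erase 0 μ y).symm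
  rw [hH]
  calc _ = ∑ i, (∏ j, x j ^ ν j) * (ν i * (k i * x (i + 1) - k (i - 1) * x (i - 1))) :=
        sum_congr rfl fun i _ => by
          rw [mul_right_comm, mul_fderiv_prod_rpow_single ν (fun j => (hx j).ne') i]
          ring
    _ = 0 := by rw [← mul_sum, sum_mul_sub_shift_eq_zero 1 k x ν hrec, mul_zero]
end

section
/- Let n ≥ 3 be odd and k_1,…,k_n nonzero reals. Set λ_1 = 1, λ_j = (k_1 k_3 ⋯ k_{j-2})/(k_2 k_4 ⋯ k_{j-1}) for odd j ≥ 3, and λ_j = (k_{j+1} k_{j+3} ⋯ k_n)/(k_j k_{j+2} ⋯ k_{n-1}) for even j ≥ 2. Then these λ_j solve the cyclic linear system k_{j-1} λ_{j-1} - k_j λ_{j+1} = 0 for all j (indices mod n), i.e., Σ_{i=1}^n λ_i K_i = 0 where K_i(x) = k_i x_{i+1} - k_{i-1} x_{i-1}. -/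
/-!
With 0-based indices (so `λ_0 = 1`) the relation reads `k_i λ_i = k_{i+1} λ_{i+2}`; each closed
form changes by one factor `k_i / k_{i+1}` (resp. `k_{i+1} / k_i`) when its index moves by two, so
the relation holds inside each parity class. Since `n` is odd, the two classes are joined by the
wrap-around steps `i = n - 2`, where the odd product is empty and `λ_n = λ_0 = 1`, and
`i = n - 1`, where the two products agree after shifting the numerator of `λ_{n-1}` by one
factor. Summing the relation against `x` and re-indexing by `± 1` makes `∑ λ_i K_i` telescope
to zero.
-/

open Finset

namespace LotkaVolterra

variable (f : ℕ → ℝ)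

/-- With `f a = k_a` (0-based), `evenLam f m` is the paper's `λ_{2m+1}` and
`oddLam f a ((n - a) / 2)` is `λ_{a+1}` for odd `a`. -/
noncomputable def evenLam (m : ℕ) : ℝ := ∏ t ∈ range m, f (2 * t) / f (2 * t + 1)

noncomputable def oddLam (a r : ℕ) : ℝ := ∏ t ∈ range r, f (a + 1 + 2 * t) / f (a + 2 * t)

variable {f}

theorem mul_evenLam_succ (m : ℕ) (hf : f (2 * m + 1) ≠ 0) :
    f (2 * m + 1) * evenLam f (m + 1) = f (2 * m) * evenLam f m := by
  rw [evenLam, prod_range_succ, ← evenLam]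
  field_simp

theorem mul_oddLam_succ (a r : ℕ) (hf : f a ≠ 0) :
    f a * oddLam f a (r + 1) = f (a + 1) * oddLam f (a + 2) r := by
  have shift :
      ∏ t ∈ range r, f (a + 1 + 2 * (t + 1)) / f (a + 2 * (t + 1)) = oddLam f (a + 2) r :=
    prod_congr rfl fun t _ => by ring_nf
  rw [oddLam, prod_range_succ', shift, mul_zero, add_zero, add_zero]
  field_simp

theorem mul_evenLam_eq_mul_oddLam_one (c : ℕ) :
    f (2 * c) * evenLam f c = f 0 * oddLam f 1 c := by
  have num :
      f (2 * c) * ∏ t ∈ range c, f (2 * t) = f 0 * ∏ t ∈ range c, f (1 + 1 + 2 * t) := by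
    have h := (prod_range_succ (fun t => f (2 * t)) c).symm.trans
      (prod_range_succ' (fun t => f (2 * t)) c)
    rw [mul_comm, h, mul_comm, mul_zero]
    exact congrArg _ (prod_congr rfl fun t _ => by ring_nf)
  have den : ∏ t ∈ range c, f (2 * t + 1) = ∏ t ∈ range c, f (1 + 2 * t) :=
    prod_congr rfl fun t _ => by ring_nf
  rw [evenLam, oddLam, prod_div_distrib, prod_div_distrib, ← mul_div_assoc, ← mul_div_assoc,
    num, den]

theorem cyclic_relation_of_eq_lam (c : ℕ) (g : ℕ → ℝ) (hf : ∀ m, f m ≠ 0)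
    (hf_period : f (2 * c + 1) = f 0) (hg_period : g (2 * c + 1 + 1) = g 1)
    (hg_even : ∀ m ≤ c, g (2 * m) = evenLam f m)
    (hg_odd : ∀ m ≤ c, g (2 * m + 1) = oddLam f (2 * m + 1) (c - m))
    (i : ℕ) (hi : i ≤ 2 * c) : f i * g i = f (i + 1) * g (i + 1 + 1) := by
  obtain ⟨m, rfl | rfl⟩ := Nat.even_or_odd' i
  · rcases (show m < c ∨ m = c by omega) with hm | rfl
    · rw [hg_even m hm.le, show 2 * m + 1 + 1 = 2 * (m + 1) by ring, hg_even (m + 1) hm,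
        mul_evenLam_succ m (hf _)]
    · rw [hg_even m le_rfl, hf_period, hg_period, hg_odd 0 m.zero_le,
        mul_evenLam_eq_mul_oddLam_one]
      rfl
  · rw [hg_odd m (by omega), show 2 * m + 1 + 1 + 1 = 2 * (m + 1) + 1 by ring,
      hg_odd (m + 1) (by omega), show c - m = c - (m + 1) + 1 by omega,
      mul_oddLam_succ _ _ (hf _)]
    rfl

theorem sum_mul_cofactor_eq_zero {G : Type*} [AddCommGroup G] [Fintype G] (s : G)
    (k lam : G → ℝ) (h : ∀ j, k (j - s) * lam (j - s) = k j * lam (j + s)) (x : G → ℝ) :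
    ∑ i, lam i * (k i * x (i + s) - k (i - s) * x (i - s)) = 0 := by
  have up : ∑ i, lam i * (k i * x (i + s)) = ∑ j, k (j - s) * lam (j - s) * x j :=
    Fintype.sum_equiv (Equiv.addRight s) _ _ fun i => by
      simp only [Equiv.coe_addRight, add_sub_cancel_right]; ring
  have down : ∑ i, lam i * (k (i - s) * x (i - s)) = ∑ j, k j * lam (j + s) * x j :=
    Fintype.sum_equiv (Equiv.subRight s) _ _ fun i => by
      simp only [Equiv.subRight_apply, sub_add_cancel]; ring
  simp only [mul_sub, sum_sub_distrib, up, down, h, sub_self]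

end LotkaVolterra

open LotkaVolterra

open Fin.NatCast in
theorem lv_odd_lambda_solves_general (n : ℕ) [NeZero n] (hodd : Odd n)
    (k : Fin n → ℝ) (hk : ∀ i, k i ≠ 0)
    (lam : Fin n → ℝ) (hlam1 : lam 0 = 1)
    (hlameven : ∀ i : Fin n, 2 ≤ (i : ℕ) → (i : ℕ) % 2 = 0 →
      lam i = ∏ t ∈ Finset.range ((i : ℕ) / 2),
        k ((2 * t : ℕ) : Fin n) / k ((2 * t + 1 : ℕ) : Fin n))
    (hlamodd : ∀ i : Fin n, (i : ℕ) % 2 = 1 →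
      lam i = ∏ t ∈ Finset.range ((n - (i : ℕ)) / 2),
        k (((i : ℕ) + 1 + 2 * t : ℕ) : Fin n) / k (((i : ℕ) + 2 * t : ℕ) : Fin n)) :
    (∀ j : Fin n, k (j - 1) * lam (j - 1) - k j * lam (j + 1) = 0) ∧
    (∀ x : Fin n → ℝ,
      ∑ i : Fin n, lam i * (k i * x (i + 1) - k (i - 1) * x (i - 1)) = 0) := by
  obtain ⟨c, rfl⟩ := hodd
  have hg_even :
      ∀ m ≤ c, lam ((2 * m : ℕ) : Fin (2 * c + 1)) = evenLam (fun a : ℕ => k a) m := by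
    intro m hm
    rcases m.eq_zero_or_pos with rfl | hm0
    · simpa [evenLam] using hlam1
    · have hval : (((2 * m : ℕ) : Fin (2 * c + 1)) : ℕ) = 2 * m :=
        Fin.val_cast_of_lt (by omega)
      have h := hlameven ((2 * m : ℕ) : Fin (2 * c + 1))
      rw [hval, Nat.mul_div_cancel_left m two_pos] at h
      exact h (by omega) (by omega)
  have hg_odd : ∀ m ≤ c, lam ((2 * m + 1 : ℕ) : Fin (2 * c + 1)) =
      oddLam (fun a : ℕ => k a) (2 * m + 1) (c - m) := by
    intro m hm
    rcases hm.lt_or_eq with hm | rfl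
    · have hval : (((2 * m + 1 : ℕ) : Fin (2 * c + 1)) : ℕ) = 2 * m + 1 :=
        Fin.val_cast_of_lt (by omega)
      have h := hlamodd ((2 * m + 1 : ℕ) : Fin (2 * c + 1))
      rw [hval, show (2 * c + 1 - (2 * m + 1)) / 2 = c - m by omega] at h
      exact h (by omega)
    · simpa [oddLam] using hlam1
  have rel : ∀ j : Fin (2 * c + 1), k (j - 1) * lam (j - 1) = k j * lam (j + 1) := by
    intro j
    have h := cyclic_relation_of_eq_lam c (fun a : ℕ => lam a) (fun a => hk _) (by simp)
      (by rw [Nat.cast_add (2 * c + 1), Fin.natCast_self, zero_add]) hg_even hg_odd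
      (j - 1).val (by omega)
    simpa using h
  exact ⟨fun j => sub_eq_zero.2 (rel j), sum_mul_cofactor_eq_zero 1 k lam rel⟩

open Fin.NatCast in
/-- For odd `n ≥ 3`, the exponents `λ` (with `λ₁ = 1`, written 0-based below) solve
the cyclic linear system `k_{j-1} λ_{j-1} - k_j λ_{j+1} = 0` for all `j`, i.e.
`∑ i, λ i * K i = 0` where `K i x = k i * x (i+1) - k (i-1) * x (i-1)`. -/
theorem lv_odd_lambda_solves (n : ℕ) [NeZero n] (hn : 3 ≤ n) (hodd : Odd n)
    (k : Fin n → ℝ) (hk : ∀ i, k i ≠ 0)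
    (lam : Fin n → ℝ) (hlam1 : lam 0 = 1)
    (hlameven : ∀ i : Fin n, 2 ≤ (i : ℕ) → (i : ℕ) % 2 = 0 →
      lam i = ∏ t ∈ Finset.range ((i : ℕ) / 2),
        k ((2 * t : ℕ) : Fin n) / k ((2 * t + 1 : ℕ) : Fin n))
    (hlamodd : ∀ i : Fin n, (i : ℕ) % 2 = 1 →
      lam i = ∏ t ∈ Finset.range ((n - (i : ℕ)) / 2),
        k (((i : ℕ) + 1 + 2 * t : ℕ) : Fin n) / k (((i : ℕ) + 2 * t : ℕ) : Fin n)) :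
    (∀ j : Fin n, k (j - 1) * lam (j - 1) - k j * lam (j + 1) = 0) ∧
    (∀ x : Fin n → ℝ,
      ∑ i : Fin n, lam i * (k i * x (i + 1) - k (i - 1) * x (i - 1)) = 0) :=
  lv_odd_lambda_solves_general n hodd k hk lam hlam1 hlameven hlamodd
end

section
/- Let n ≥ 4 be even and suppose k_1 k_3 ⋯ k_{n-1} = k_2 k_4 ⋯ k_n with all k_i nonzero. Define μ_j = (k_{j+1} k_{j+3} ⋯ k_n)/(k_j k_{j+2} ⋯ k_{n-1}) for odd j ≥ 3. Then H_2(x) = x_1 x_3^{μ_3} x_5^{μ_5} ⋯ x_{n-1}^{μ_{n-1}} is a first integral of the system ẋ_i = x_i(k_i x_{i+1} - k_{i-1} x_{i-1}) on the open positive orthant. -/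
/-!
At a point of the positive orthant, `x_i ∂_i H = e_i H` for a monomial `H = ∏ x_j ^ e_j`, so
`∑ P_i ∂_i H = H ∑ e_i (k_i x_{i+1} - k_{i-1} x_{i-1})`. Shifting the index of the second sum
by two shows that this vanishes as soon as `e_i k_i = e_{i+2} k_{i+1}` for all `i` (mod `n`).
For `H₂` the exponents vanish at even (1-based) indices, where the recurrence is trivial; at
odd ones it is the telescoping `μ_j k_j = μ_{j+2} k_{j+1}` of the defining products, closed up
cyclically by `μ_1 = μ_{n+1} = 1`: the empty product at `j = n + 1`, and the hypothesis
`k_1 k_3 ⋯ k_{n-1} = k_2 k_4 ⋯ k_n` at `j = 1`.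
-/

open Finset

theorem mul_fderiv_prod_rpow_apply_single {ι : Type*} [Fintype ι] [DecidableEq ι]
    (s : Finset ι) (e : ι → ℝ) {x : ι → ℝ} (hx : ∀ j ∈ s, x j ≠ 0) (i : ι) :
    x i * fderiv ℝ (fun y : ι → ℝ => ∏ j ∈ s, y j ^ e j) x (Pi.single i 1)
      = (if i ∈ s then e i else 0) * ∏ j ∈ s, x j ^ e j := by
  have hfactor : ∀ j ∈ s, HasFDerivAt (fun y : ι → ℝ => y j ^ e j)
      ((e j * x j ^ (e j - 1)) • ContinuousLinearMap.proj j) x := fun j hj =>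
    (hasFDerivAt_apply j x).rpow_const (Or.inl (hx j hj))
  rw [(HasFDerivAt.finsetProd hfactor).fderiv]
  simp only [_root_.sum_apply, smul_apply, ContinuousLinearMap.proj_apply, Pi.single_apply,
    smul_eq_mul, mul_ite, mul_one, mul_zero, sum_ite_eq', ite_mul, zero_mul]
  split_ifs with hi
  · rw [← mul_prod_erase s _ hi, Real.rpow_sub_one (hx i hi)]
    field_simp [hx i hi]
  · simp

theorem sum_weighted_lv_eq_zero {n : ℕ} [NeZero n] (w k x : Fin n → ℝ)
    (hw : ∀ i, w i * k i = w (i + 2) * k (i + 1)) :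
    ∑ i, w i * (k i * x (i + 1) - k (i - 1) * x (i - 1)) = 0 := by
  have hshift : ∑ i, w i * (k (i - 1) * x (i - 1)) = ∑ i, w (i + 2) * (k (i + 1) * x (i + 1)) :=
    (Fintype.sum_equiv (Equiv.addRight 2) _ _ fun i => by
      rw [Equiv.coe_addRight, show i + 2 - 1 = i + 1 by grind]).symm
  calc ∑ i, w i * (k i * x (i + 1) - k (i - 1) * x (i - 1))
      = ∑ i, w i * k i * x (i + 1) - ∑ i, w (i + 2) * k (i + 1) * x (i + 1) := by
        simp only [mul_sub, sum_sub_distrib, hshift, mul_assoc]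
    _ = 0 := by simp only [hw, sub_self]

theorem sum_lv_mul_fderiv_prod_rpow_eq_zero {n : ℕ} [NeZero n] (k : Fin n → ℝ)
    (s : Finset (Fin n)) (e : Fin n → ℝ) {x : Fin n → ℝ} (hx : ∀ j ∈ s, x j ≠ 0)
    (he : ∀ i, (if i ∈ s then e i else 0) * k i
      = (if i + 2 ∈ s then e (i + 2) else 0) * k (i + 1)) :
    ∑ i, x i * (k i * x (i + 1) - k (i - 1) * x (i - 1)) *
      fderiv ℝ (fun y : Fin n → ℝ => ∏ j ∈ s, y j ^ e j) x (Pi.single i 1) = 0 := by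
  calc _ = ∑ i, (∏ j ∈ s, x j ^ e j) * ((if i ∈ s then e i else 0) *
        (k i * x (i + 1) - k (i - 1) * x (i - 1))) := by
        refine sum_congr rfl fun i _ => ?_
        rw [mul_right_comm, mul_fderiv_prod_rpow_apply_single s e hx]
        ring
    _ = 0 := by rw [← mul_sum, sum_weighted_lv_eq_zero _ k x he, mul_zero]

def alternatingRatio {K : Type*} [Field K] (k : ℕ → K) (m L : ℕ) : K :=
  ∏ t ∈ range L, k (m + 1 + 2 * t) / k (m + 2 * t)

theorem alternatingRatio_succ_mul {K : Type*} [Field K] (k : ℕ → K) (m L : ℕ) (hk : k m ≠ 0) :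
    alternatingRatio k m (L + 1) * k m = alternatingRatio k (m + 2) L * k (m + 1) := by
  simp only [alternatingRatio, prod_range_succ', mul_zero, add_zero, mul_add, mul_one,
    mul_assoc, div_mul_cancel₀ _ hk]
  congr 2 with t; ring_nf

theorem alternatingRatio_zero_eq_one {K : Type*} [Field K] {k : ℕ → K} {L : ℕ}
    (hk : ∀ t, k (2 * t) ≠ 0)
    (hprod : ∏ t ∈ range L, k (2 * t) = ∏ t ∈ range L, k (2 * t + 1)) :
    alternatingRatio k 0 L = 1 := by
  simp only [alternatingRatio, prod_div_distrib, zero_add, add_comm 1]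
  rw [← hprod, div_self (prod_ne_zero_iff.mpr fun t _ => hk t)]

open Fin.NatCast

-- Indices are 0-based, so these are the paper's odd indices `1, 3, …, n - 1`.
def evenIndices (n : ℕ) : Finset (Fin n) := univ.filter fun j => (j : ℕ) % 2 = 0

theorem evenIndices_exponent_recurrence {n : ℕ} [NeZero n] (heven : Even n)
    {k : Fin n → ℝ} (hk : ∀ i, k i ≠ 0)
    (hprod : ∏ t ∈ Finset.range (n / 2), k ((2 * t : ℕ) : Fin n)
           = ∏ t ∈ Finset.range (n / 2), k ((2 * t + 1 : ℕ) : Fin n))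
    {μ : Fin n → ℝ}
    (hμ : ∀ i : Fin n, 2 ≤ (i : ℕ) → (i : ℕ) % 2 = 0 →
      μ i = ∏ t ∈ Finset.range ((n - (i : ℕ)) / 2),
        k (((i : ℕ) + 1 + 2 * t : ℕ) : Fin n) / k (((i : ℕ) + 2 * t : ℕ) : Fin n))
    (i : Fin n) :
    (if i ∈ evenIndices n then Function.update μ 0 1 i else 0) * k i
      = (if i + 2 ∈ evenIndices n then Function.update μ 0 1 (i + 2) else 0) * k (i + 1) := by
  -- `ρ m` is the paper's `μ_{m+1}`; its formula also makes sense at `m = 0` and `m = n`.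
  set ρ : ℕ → ℝ := fun m => alternatingRatio (fun m : ℕ => k m) m ((n - m) / 2) with hρ
  have hn2 : n % 2 = 0 := Nat.even_iff.mp heven
  have hρ_zero : ρ 0 = 1 := alternatingRatio_zero_eq_one (fun _ => hk _) hprod
  have hρ_self : ρ n = 1 := by simp [hρ, alternatingRatio]
  have hweight : ∀ a : ℕ, a ≤ n → a % 2 = 0 →
      (if (a : Fin n) ∈ evenIndices n then Function.update μ 0 1 a else 0) = ρ a := by
    intro a ha hpar
    by_cases h0 : (a : Fin n) = 0
    · rw [h0, if_pos (by simp [evenIndices]), Function.update_self]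
      rcases Nat.eq_zero_or_pos a with rfl | hpos
      · exact hρ_zero.symm
      · rw [le_antisymm ha (Nat.le_of_dvd hpos (Fin.natCast_eq_zero.mp h0)), hρ_self]
    · have hlt : a < n := lt_of_le_of_ne ha fun h => h0 (by simp [h])
      have hval : ((a : Fin n) : ℕ) = a := Fin.val_cast_of_lt hlt
      have ha0 : a ≠ 0 := by rintro rfl; exact h0 Nat.cast_zero
      rw [if_pos (by simp [evenIndices, hval, hpar]), Function.update_of_ne h0,
        hμ _ (by omega) (by rw [hval]; exact hpar), hval]
      rfl
  obtain ⟨m, hm, rfl⟩ : ∃ m < n, (m : Fin n) = i := ⟨i, i.isLt, Fin.cast_val_eq_self i⟩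
  have hsucc : ((m : ℕ) : Fin n) + 1 = ((m + 1 : ℕ) : Fin n) := by push_cast; rfl
  have hsucc2 : ((m : ℕ) : Fin n) + 2 = ((m + 2 : ℕ) : Fin n) := by push_cast; rfl
  rw [hsucc, hsucc2]
  rcases Nat.mod_two_eq_zero_or_one m with hpar | hpar
  · rw [hweight m hm.le hpar, hweight (m + 2) (by omega) (by omega)]
    have hlen : (n - m) / 2 = (n - (m + 2)) / 2 + 1 := by omega
    simp only [hρ, hlen]
    exact alternatingRatio_succ_mul _ _ _ (hk _)
  · have hodd : ∀ a : ℕ, a % 2 = 1 → (a : Fin n) ∉ evenIndices n := fun a ha => by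
      simp [evenIndices, Fin.val_natCast, Nat.mod_mod_of_dvd _ (Nat.dvd_of_mod_eq_zero hn2), ha]
    rw [if_neg (hodd m hpar), if_neg (hodd (m + 2) (by omega)), zero_mul, zero_mul]


open Fin.NatCast in
theorem lv_even_H2_first_integral_general (n : ℕ) [NeZero n] (heven : Even n)
    (k : Fin n → ℝ) (hk : ∀ i, k i ≠ 0)
    (hprod : ∏ t ∈ Finset.range (n / 2), k ((2 * t : ℕ) : Fin n)
           = ∏ t ∈ Finset.range (n / 2), k ((2 * t + 1 : ℕ) : Fin n))
    (μ : Fin n → ℝ)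
    (hμ : ∀ i : Fin n, 2 ≤ (i : ℕ) → (i : ℕ) % 2 = 0 →
      μ i = ∏ t ∈ Finset.range ((n - (i : ℕ)) / 2),
        k (((i : ℕ) + 1 + 2 * t : ℕ) : Fin n) / k (((i : ℕ) + 2 * t : ℕ) : Fin n))
    (x : Fin n → ℝ) (hx : ∀ i, 0 < x i) :
    ∑ i : Fin n, x i * (k i * x (i + 1) - k (i - 1) * x (i - 1)) *
        fderiv ℝ
          (fun y : Fin n → ℝ => y 0 *
            ∏ j ∈ (Finset.univ.filter (fun j : Fin n => (j : ℕ) % 2 = 0)).erase 0,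
              (y j) ^ (μ j)) x
          (Pi.single i 1) = 0 := by
  have hH : (fun y : Fin n → ℝ => y 0 *
      ∏ j ∈ (Finset.univ.filter (fun j : Fin n => (j : ℕ) % 2 = 0)).erase 0, (y j) ^ (μ j))
      = fun y => ∏ j ∈ evenIndices n, y j ^ Function.update μ 0 1 j := by
    funext y
    rw [← insert_erase (show (0 : Fin n) ∈ evenIndices n by simp [evenIndices]),
      prod_insert (notMem_erase _ _), Function.update_self, Real.rpow_one]
    exact congrArg _ (prod_congr rfl fun j hj => by rw [Function.update_of_ne (ne_of_mem_erase hj)])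
  rw [hH]
  exact sum_lv_mul_fderiv_prod_rpow_eq_zero k _ _ (fun j _ => (hx j).ne')
    (evenIndices_exponent_recurrence heven hk hprod hμ)

open Fin.NatCast in
/-- For even `n ≥ 4` with `k₁k₃⋯k_{n-1} = k₂k₄⋯k_n`, the function
`H₂ = x₁ x₃^{μ₃} ⋯ x_{n-1}^{μ_{n-1}}` (odd 1-based indices, i.e. even 0-based
indices) is a first integral on the open positive orthant, where
`μ_j = k_{j+1}k_{j+3}⋯k_n/(k_j k_{j+2}⋯k_{n-1})` for odd `j ≥ 3`. -/
theorem lv_even_H2_first_integral (n : ℕ) [NeZero n] (hn : 4 ≤ n) (heven : Even n)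
    (k : Fin n → ℝ) (hk : ∀ i, k i ≠ 0)
    (hprod : ∏ t ∈ Finset.range (n / 2), k ((2 * t : ℕ) : Fin n)
           = ∏ t ∈ Finset.range (n / 2), k ((2 * t + 1 : ℕ) : Fin n))
    (μ : Fin n → ℝ)
    (hμ : ∀ i : Fin n, 2 ≤ (i : ℕ) → (i : ℕ) % 2 = 0 →
      μ i = ∏ t ∈ Finset.range ((n - (i : ℕ)) / 2),
        k (((i : ℕ) + 1 + 2 * t : ℕ) : Fin n) / k (((i : ℕ) + 2 * t : ℕ) : Fin n))
    (x : Fin n → ℝ) (hx : ∀ i, 0 < x i) :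
    ∑ i : Fin n, x i * (k i * x (i + 1) - k (i - 1) * x (i - 1)) *
        fderiv ℝ
          (fun y : Fin n → ℝ => y 0 *
            ∏ j ∈ (Finset.univ.filter (fun j : Fin n => (j : ℕ) % 2 = 0)).erase 0,
              (y j) ^ (μ j)) x
          (Pi.single i 1) = 0 :=
  lv_even_H2_first_integral_general n heven k hk hprod μ hμ x hx
end

section
/- Let n ≥ 4 be even and suppose k_1 k_3 ⋯ k_{n-1} = k_2 k_4 ⋯ k_n with all k_i nonzero. Define μ_j = (k_2 k_4 ⋯ k_{j-2})/(k_3 k_5 ⋯ k_{j-1}) for even j ≥ 4. Then H_3(x) = x_2 x_4^{μ_4} ⋯ x_n^{μ_n} is a first integral of the system ẋ_i = x_i(k_i x_{i+1} - k_{i-1} x_{i-1}) on the open positive orthant. -/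
/-!
On the positive orthant `H₃ = ∏_{j odd} x_j ^ ν_j` (0-based indices, `ν₁ = 1`, `ν_j = μ_j`
otherwise) is a monomial, so `Ḣ₃ = H₃ · ∑_{j odd} ν_j ẋ_j / x_j`, and the Lotka–Volterra
field turns the sum into the linear form `∑_{j odd} ν_j (k_j x_{j+1} - k_{j-1} x_{j-1})`.
The exponents satisfy `ν_j k_j = ν_{j+2} k_{j+1}`, so the sum telescopes to
`ν_{n+1} k_n x_n - k_0 x_0`, and the product hypothesis says exactly that `ν_{n+1} k_n = k_0`.
-/

open Fin.NatCast

open Finset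

theorem sum_mul_apply_single {ι R : Type*} [Fintype ι] [DecidableEq ι] [Semiring R]
    [TopologicalSpace R] (L : (ι → R) →L[R] R) (v : ι → R) :
    ∑ i, v i * L (Pi.single i 1) = L v := by
  conv_rhs => rw [← univ_sum_single v]
  rw [map_sum]
  refine sum_congr rfl fun i _ => ?_
  rw [← smul_eq_mul, ← map_smul, ← Pi.single_smul, smul_eq_mul, mul_one]

theorem mul_prod_erase_rpow {ι : Type*} [DecidableEq ι] (s : Finset ι) {a : ι} (ha : a ∈ s)
    (μ y : ι → ℝ) :
    y a * ∏ j ∈ s.erase a, y j ^ μ j = ∏ j ∈ s, y j ^ Function.update μ a 1 j := by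
  rw [← mul_prod_erase s _ ha, Function.update_self, Real.rpow_one]
  congr 1
  exact prod_congr rfl fun j hj => by rw [Function.update_of_ne (ne_of_mem_erase hj)]

theorem fderiv_prod_rpow_apply {ι : Type*} [Fintype ι] [DecidableEq ι] (s : Finset ι)
    (ν : ι → ℝ) {x : ι → ℝ} (hx : ∀ j ∈ s, x j ≠ 0) (v : ι → ℝ) :
    fderiv ℝ (fun y : ι → ℝ => ∏ j ∈ s, y j ^ ν j) x v
      = (∏ j ∈ s, x j ^ ν j) * ∑ j ∈ s, ν j * v j / x j := by
  have hfactor : ∀ j ∈ s, HasFDerivAt (fun y : ι → ℝ => y j ^ ν j)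
      ((ν j * x j ^ (ν j - 1)) • ContinuousLinearMap.proj j) x := fun j hj =>
    (hasFDerivAt_apply j x).rpow_const (Or.inl (hx j hj))
  rw [(HasFDerivAt.finsetProd hfactor).fderiv, mul_sum]
  simp only [_root_.sum_apply, smul_apply, ContinuousLinearMap.proj_apply, smul_eq_mul]
  refine sum_congr rfl fun j hj => ?_
  rw [Real.rpow_sub_one (hx j hj), ← mul_prod_erase s (fun j => x j ^ ν j) hj]
  field_simp [hx j hj]

section Telescoping

variable {K : Type*} [Field K]

-- `ratioProd κ t` is the exponent `ν_{2t+1}` of `x_{2t+1}` (the paper's `μ_{2t+2}`).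
def ratioProd (κ : ℕ → K) (t : ℕ) : K :=
  ∏ s ∈ range t, κ (2 * s + 1) / κ (2 * s + 2)

theorem ratioProd_succ (κ : ℕ → K) (t : ℕ) :
    ratioProd κ (t + 1) = ratioProd κ t * (κ (2 * t + 1) / κ (2 * t + 2)) :=
  prod_range_succ _ _

theorem ratioProd_mul_eq (κ : ℕ → K) (hκ : ∀ s, κ (2 * s) ≠ 0) (m : ℕ) :
    ratioProd κ m * κ (2 * m)
      = κ 0 * (∏ s ∈ range m, κ (2 * s + 1)) / ∏ s ∈ range m, κ (2 * s) := by
  induction m with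
  | zero => simp [ratioProd]
  | succ m ih =>
    have h2 : κ (2 * m + 2) ≠ 0 := hκ (m + 1)
    rw [ratioProd_succ, prod_range_succ, prod_range_succ, show 2 * (m + 1) = 2 * m + 2 by ring]
    calc ratioProd κ m * (κ (2 * m + 1) / κ (2 * m + 2)) * κ (2 * m + 2)
        = ratioProd κ m * κ (2 * m) * κ (2 * m + 1) / κ (2 * m) := by field_simp [hκ m, h2]
      _ = _ := by rw [ih]; ring

theorem sum_range_ratioProd_mul_sub (κ ξ : ℕ → K) (hκ : ∀ s, κ (2 * s) ≠ 0) (m : ℕ) :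
    ∑ t ∈ range m, ratioProd κ t * (κ (2 * t + 1) * ξ (2 * t + 2) - κ (2 * t) * ξ (2 * t))
      = ratioProd κ m * κ (2 * m) * ξ (2 * m) - κ 0 * ξ 0 := by
  induction m with
  | zero => simp [ratioProd]
  | succ m ih =>
    have h2 : κ (2 * m + 2) ≠ 0 := hκ (m + 1)
    rw [sum_range_succ, ih, ratioProd_succ, show 2 * (m + 1) = 2 * m + 2 by ring]
    field_simp [h2]
    ring

theorem sum_range_ratioProd_mul_sub_eq_zero (κ ξ : ℕ → K) (hκ : ∀ s, κ (2 * s) ≠ 0) (m : ℕ)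
    (hprod : ∏ s ∈ range m, κ (2 * s) = ∏ s ∈ range m, κ (2 * s + 1)) (hξ : ξ (2 * m) = ξ 0) :
    ∑ t ∈ range m, ratioProd κ t * (κ (2 * t + 1) * ξ (2 * t + 2) - κ (2 * t) * ξ (2 * t))
      = 0 := by
  have hprod_ne : ∏ s ∈ range m, κ (2 * s) ≠ 0 := prod_ne_zero_iff.mpr fun s _ => hκ s
  rw [sum_range_ratioProd_mul_sub κ ξ hκ, ratioProd_mul_eq κ hκ, ← hprod,
    mul_div_cancel_right₀ _ hprod_ne, hξ, sub_self]

end Telescoping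

theorem Fin.sum_filter_odd_eq_sum_range {M : Type*} [AddCommMonoid M] {n m : ℕ} [NeZero n]
    (hnm : n = 2 * m) (f : Fin n → M) :
    ∑ j ∈ univ.filter (fun j : Fin n => (j : ℕ) % 2 = 1), f j
      = ∑ t ∈ range m, f ((2 * t + 1 : ℕ) : Fin n) := by
  have hval : ∀ t < m, (((2 * t + 1 : ℕ) : Fin n) : ℕ) = 2 * t + 1 := fun t ht =>
    Fin.val_cast_of_lt (by omega)
  have hinv : ∀ j : Fin n, (j : ℕ) % 2 = 1 → ((2 * (((j : ℕ) - 1) / 2) + 1 : ℕ) : Fin n) = j :=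
    fun j hj => by rw [show 2 * (((j : ℕ) - 1) / 2) + 1 = j by omega, Fin.cast_val_eq_self]
  refine sum_nbij' (fun j => ((j : ℕ) - 1) / 2) (fun t => ((2 * t + 1 : ℕ) : Fin n))
    (fun j h => ?_) (fun t h => ?_) (fun j h => ?_) (fun t h => ?_) (fun j h => ?_)
  all_goals simp only [mem_filter, mem_univ, true_and, mem_range] at h ⊢
  · have := j.isLt
    omega
  · rw [hval t h]
    omega
  · exact hinv j h
  · rw [hval t h]
    omega
  · rw [hinv j h]

theorem update_one_eq_ratioProd {K : Type*} [Field K] {n : ℕ} [NeZero n] (k μ : Fin n → K)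
    (hμ : ∀ i : Fin n, 3 ≤ (i : ℕ) → (i : ℕ) % 2 = 1 →
      μ i = ∏ t ∈ range (((i : ℕ) - 1) / 2),
        k ((2 * t + 1 : ℕ) : Fin n) / k ((2 * t + 2 : ℕ) : Fin n))
    {t : ℕ} (ht : 2 * t + 1 < n) :
    Function.update μ 1 1 ((2 * t + 1 : ℕ) : Fin n) = ratioProd (fun s => k (s : Fin n)) t := by
  rcases Nat.eq_zero_or_pos t with rfl | ht0
  · simp [ratioProd]
  have hval : (((2 * t + 1 : ℕ) : Fin n) : ℕ) = 2 * t + 1 := Fin.val_cast_of_lt ht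
  have hne : ((2 * t + 1 : ℕ) : Fin n) ≠ 1 := fun h => by
    rw [h, Fin.val_one', Nat.mod_eq_of_lt (by omega)] at hval
    omega
  rw [Function.update_of_ne hne, hμ _ (by omega) (by omega), hval,
    show (2 * t + 1 - 1) / 2 = t by omega]
  rfl

theorem lv_even_H3_first_integral_general (n : ℕ) [NeZero n] (heven : Even n)
    (k : Fin n → ℝ) (hk : ∀ i, k i ≠ 0)
    (hprod : ∏ t ∈ Finset.range (n / 2), k ((2 * t : ℕ) : Fin n)
           = ∏ t ∈ Finset.range (n / 2), k ((2 * t + 1 : ℕ) : Fin n))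
    (μ : Fin n → ℝ)
    (hμ : ∀ i : Fin n, 3 ≤ (i : ℕ) → (i : ℕ) % 2 = 1 →
      μ i = ∏ t ∈ Finset.range (((i : ℕ) - 1) / 2),
        k ((2 * t + 1 : ℕ) : Fin n) / k ((2 * t + 2 : ℕ) : Fin n))
    (x : Fin n → ℝ) (hx : ∀ i, 0 < x i) :
    ∑ i : Fin n, x i * (k i * x (i + 1) - k (i - 1) * x (i - 1)) *
        fderiv ℝ
          (fun y : Fin n → ℝ => y 1 *
            ∏ j ∈ (Finset.univ.filter (fun j : Fin n => (j : ℕ) % 2 = 1)).erase 1,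
              (y j) ^ (μ j)) x
          (Pi.single i 1) = 0 := by
  obtain ⟨m, hnm⟩ : ∃ m, n = 2 * m := heven.exists_two_nsmul n
  set S := univ.filter (fun j : Fin n => (j : ℕ) % 2 = 1)
  set κ : ℕ → ℝ := fun s => k (s : Fin n)
  set ξ : ℕ → ℝ := fun s => x (s : Fin n)
  have h1 : (1 : Fin n) ∈ S := by
    have := NeZero.ne n
    simp only [S, mem_filter, mem_univ, true_and, Fin.val_one', Nat.mod_eq_of_lt (by omega : 1 < n)]
  have hterm : ∀ t ∈ range m,
      Function.update μ 1 1 ((2 * t + 1 : ℕ) : Fin n) *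
        (x ((2 * t + 1 : ℕ) : Fin n) *
          (k ((2 * t + 1 : ℕ) : Fin n) * x (((2 * t + 1 : ℕ) : Fin n) + 1)
            - k (((2 * t + 1 : ℕ) : Fin n) - 1) * x (((2 * t + 1 : ℕ) : Fin n) - 1)))
        / x ((2 * t + 1 : ℕ) : Fin n)
      = ratioProd κ t * (κ (2 * t + 1) * ξ (2 * t + 2) - κ (2 * t) * ξ (2 * t)) := by
    intro t ht
    have hnext : ((2 * t + 1 : ℕ) : Fin n) + 1 = ((2 * t + 2 : ℕ) : Fin n) := (Nat.cast_succ _).symm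
    have hprev : ((2 * t + 1 : ℕ) : Fin n) - 1 = ((2 * t : ℕ) : Fin n) := by
      rw [Nat.cast_succ, add_sub_cancel_right]
    rw [hnext, hprev, update_one_eq_ratioProd k μ hμ (by rw [mem_range] at ht; omega),
      mul_div_assoc, mul_div_cancel_left₀ _ (hx _).ne']
  simp_rw [mul_prod_erase_rpow S h1 μ]
  rw [sum_mul_apply_single, fderiv_prod_rpow_apply S _ (fun j _ => (hx j).ne'),
    Fin.sum_filter_odd_eq_sum_range hnm, sum_congr rfl hterm,
    sum_range_ratioProd_mul_sub_eq_zero κ ξ (fun s => hk _) m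
      (by rwa [show n / 2 = m by omega] at hprod)
      (by simp only [ξ, ← hnm, Fin.natCast_self, Nat.cast_zero]), mul_zero]

/-- For even `n ≥ 4` with `k₁k₃⋯k_{n-1} = k₂k₄⋯k_n`, the function
`H₃ = x₂ x₄^{μ₄} ⋯ x_n^{μ_n}` (even 1-based indices, i.e. odd 0-based indices)
is a first integral on the open positive orthant, where
`μ_j = k₂k₄⋯k_{j-2}/(k₃k₅⋯k_{j-1})` for even `j ≥ 4`. -/
theorem lv_even_H3_first_integral (n : ℕ) [NeZero n] (hn : 4 ≤ n) (heven : Even n)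
    (k : Fin n → ℝ) (hk : ∀ i, k i ≠ 0)
    (hprod : ∏ t ∈ Finset.range (n / 2), k ((2 * t : ℕ) : Fin n)
           = ∏ t ∈ Finset.range (n / 2), k ((2 * t + 1 : ℕ) : Fin n))
    (μ : Fin n → ℝ)
    (hμ : ∀ i : Fin n, 3 ≤ (i : ℕ) → (i : ℕ) % 2 = 1 →
      μ i = ∏ t ∈ Finset.range (((i : ℕ) - 1) / 2),
        k ((2 * t + 1 : ℕ) : Fin n) / k ((2 * t + 2 : ℕ) : Fin n))
    (x : Fin n → ℝ) (hx : ∀ i, 0 < x i) :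
    ∑ i : Fin n, x i * (k i * x (i + 1) - k (i - 1) * x (i - 1)) *
        fderiv ℝ
          (fun y : Fin n → ℝ => y 1 *
            ∏ j ∈ (Finset.univ.filter (fun j : Fin n => (j : ℕ) % 2 = 1)).erase 1,
              (y j) ^ (μ j)) x
          (Pi.single i 1) = 0 :=
  lv_even_H3_first_integral_general n heven k hk hprod μ hμ x hx
end

section
/- For n = 4 with k_1 k_3 = k_2 k_4 and all k_i nonzero, the functions H_1 = x_1 + x_2 + x_3 + x_4, H_2 = x_1 x_3^{k_4/k_3}, H_3 = x_2 x_4^{k_2/k_3} are all first integrals of the system ẋ_1 = x_1(k_1 x_2 - k_4 x_4), ẋ_2 = x_2(k_2 x_3 - k_1 x_1), ẋ_3 = x_3(k_3 x_4 - k_2 x_2), ẋ_4 = x_4(k_4 x_1 - k_3 x_3), on the open positive orthant of ℝ^4. -/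
/-!
The linear terms of `Σ ẋᵢ` cancel in pairs, so `H₁` is conserved. For the monomials, the
Lotka–Volterra form `ẋᵢ = xᵢ Lᵢ(x)` makes the logarithmic derivative linear:
`d/dt log H₂ = L₁ + (k₄/k₃) L₃ = (k₁ - k₂k₄/k₃) x₂` and
`d/dt log H₃ = L₂ + (k₂/k₃) L₄ = (k₂k₄/k₃ - k₁) x₁`, both zero since `k₁k₃ = k₂k₄`.
-/

theorem mul_deriv_const_mul_rpow {x : ℝ} (hx : x ≠ 0) (c p : ℝ) :
    x * deriv (fun t => c * t ^ p) x = p * (c * x ^ p) := by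
  rw [deriv_const_mul_field, Real.deriv_rpow_const, Real.rpow_sub_one hx]
  field_simp

theorem lv4_first_integrals_general (k1 k2 k3 k4 : ℝ)
    (h3 : k3 ≠ 0)
    (hk : k1 * k3 = k2 * k4)
    (x1 x2 x3 x4 : ℝ) (hx3 : 0 < x3) (hx4 : 0 < x4) :
    (x1 * (k1 * x2 - k4 * x4) * deriv (fun t => t + x2 + x3 + x4) x1
      + x2 * (k2 * x3 - k1 * x1) * deriv (fun t => x1 + t + x3 + x4) x2
      + x3 * (k3 * x4 - k2 * x2) * deriv (fun t => x1 + x2 + t + x4) x3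
      + x4 * (k4 * x1 - k3 * x3) * deriv (fun t => x1 + x2 + x3 + t) x4 = 0) ∧
    (x1 * (k1 * x2 - k4 * x4) * deriv (fun t => t * x3 ^ (k4 / k3)) x1
      + x2 * (k2 * x3 - k1 * x1) * deriv (fun _t : ℝ => x1 * x3 ^ (k4 / k3)) x2
      + x3 * (k3 * x4 - k2 * x2) * deriv (fun t => x1 * t ^ (k4 / k3)) x3
      + x4 * (k4 * x1 - k3 * x3) * deriv (fun _t : ℝ => x1 * x3 ^ (k4 / k3)) x4 = 0) ∧
    (x1 * (k1 * x2 - k4 * x4) * deriv (fun _t : ℝ => x2 * x4 ^ (k2 / k3)) x1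
      + x2 * (k2 * x3 - k1 * x1) * deriv (fun t => t * x4 ^ (k2 / k3)) x2
      + x3 * (k3 * x4 - k2 * x2) * deriv (fun _t : ℝ => x2 * x4 ^ (k2 / k3)) x3
      + x4 * (k4 * x1 - k3 * x3) * deriv (fun t => x2 * t ^ (k2 / k3)) x4 = 0) := by
  refine ⟨by simp only [deriv_add_const', deriv_const_add_id', deriv_id'']; ring, ?_, ?_⟩
  · rw [mul_right_comm x3, mul_deriv_const_mul_rpow hx3.ne']
    simp only [deriv_mul_const_field', deriv_id'', one_mul, deriv_const]
    field_simp
    linear_combination x1 * x2 * x3 ^ (k4 / k3) * hk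
  · rw [mul_right_comm x4, mul_deriv_const_mul_rpow hx4.ne']
    simp only [deriv_mul_const_field', deriv_id'', one_mul, deriv_const]
    field_simp
    linear_combination -(x1 * x2 * x4 ^ (k2 / k3)) * hk

/-- For `n = 4` with `k₁k₃ = k₂k₄`, the functions `H₁ = x₁+x₂+x₃+x₄`,
`H₂ = x₁ x₃^(k₄/k₃)` and `H₃ = x₂ x₄^(k₂/k₃)` are first integrals of the
four-dimensional Lotka-Volterra system on the open positive orthant. -/
theorem lv4_first_integrals (k1 k2 k3 k4 : ℝ)
    (h1 : k1 ≠ 0) (h2 : k2 ≠ 0) (h3 : k3 ≠ 0) (h4 : k4 ≠ 0)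
    (hk : k1 * k3 = k2 * k4)
    (x1 x2 x3 x4 : ℝ) (hx1 : 0 < x1) (hx2 : 0 < x2) (hx3 : 0 < x3) (hx4 : 0 < x4) :
    (x1 * (k1 * x2 - k4 * x4) * deriv (fun t => t + x2 + x3 + x4) x1
      + x2 * (k2 * x3 - k1 * x1) * deriv (fun t => x1 + t + x3 + x4) x2
      + x3 * (k3 * x4 - k2 * x2) * deriv (fun t => x1 + x2 + t + x4) x3
      + x4 * (k4 * x1 - k3 * x3) * deriv (fun t => x1 + x2 + x3 + t) x4 = 0) ∧
    (x1 * (k1 * x2 - k4 * x4) * deriv (fun t => t * x3 ^ (k4 / k3)) x1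
      + x2 * (k2 * x3 - k1 * x1) * deriv (fun _t : ℝ => x1 * x3 ^ (k4 / k3)) x2
      + x3 * (k3 * x4 - k2 * x2) * deriv (fun t => x1 * t ^ (k4 / k3)) x3
      + x4 * (k4 * x1 - k3 * x3) * deriv (fun _t : ℝ => x1 * x3 ^ (k4 / k3)) x4 = 0) ∧
    (x1 * (k1 * x2 - k4 * x4) * deriv (fun _t : ℝ => x2 * x4 ^ (k2 / k3)) x1
      + x2 * (k2 * x3 - k1 * x1) * deriv (fun t => t * x4 ^ (k2 / k3)) x2
      + x3 * (k3 * x4 - k2 * x2) * deriv (fun _t : ℝ => x2 * x4 ^ (k2 / k3)) x3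
      + x4 * (k4 * x1 - k3 * x3) * deriv (fun t => x2 * t ^ (k2 / k3)) x4 = 0) :=
  lv4_first_integrals_general k1 k2 k3 k4 h3 hk x1 x2 x3 x4 hx3 hx4
end
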